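/- arXiv:math/9703202 — 5 statements merged into one kernel-verified Lean document; each statement's English description precedes it below -/
import Mathlib

section
/- Let k be a field, V a k-vector space, and g : V → V a k-linear automorphism. Let g** : V** → V** denote the double dual (bidual) map, and identify V with its canonical image in V**. Then g** induces the identity on the quotient V**/V if and only if the image of (g - 1) : V → V is finite-dimensional. -/
open Module LinearMap

-- naturality of eval, pointwise
lemma eval_nat {k V W : Type*} [Field k] [AddCommGroup V] [Module k V] [AddCommGroup W]
    [Module k W] (u : V →ₗ[k] W) (x : V) :
    u.dualMap.dualMap (Module.Dual.eval k V x) = Module.Dual.eval k W (u x) := rfl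

-- dualMap.dualMap of a difference
lemma ddual_sub {k V : Type*} [Field k] [AddCommGroup V] [Module k V]
    (f g : V →ₗ[k] V) (ξ : Module.Dual k (Module.Dual k V)) :
    (f - g).dualMap.dualMap ξ = f.dualMap.dualMap ξ - g.dualMap.dualMap ξ := by
  ext φ
  simp [LinearMap.dualMap_apply, map_sub]
  rw [← map_sub ξ]
  congr 1
  ext x
  simp


/-- Meierfrankenfeld's characterization: an automorphism `g` of `V` induces the identity on
`V**/V` (where `V` is canonically embedded in its double dual) iff `g` is finitary, i.e.
`im (g - 1)` is finite-dimensional. -/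
theorem bidual_trivial_iff_finitary (k V : Type*) [Field k] [AddCommGroup V] [Module k V]
    (g : V ≃ₗ[k] V) :
    (∀ ξ : Module.Dual k (Module.Dual k V),
        (g : V →ₗ[k] V).dualMap.dualMap ξ - ξ ∈ LinearMap.range (Module.Dual.eval k V)) ↔
      FiniteDimensional k (LinearMap.range ((g : V →ₗ[k] V) - LinearMap.id)) := by
  constructor
  · intro h
    classical
    by_contra hW
    set f : V →ₗ[k] V := (g : V →ₗ[k] V) - LinearMap.id with hf
    set W := LinearMap.range f with hWdef
    let b := Basis.ofVectorSpace k W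
    have hinf : Infinite (Basis.ofVectorSpaceIndex k W) := by
      rw [← not_finite_iff_infinite]
      intro h'
      exact hW (Module.Finite.of_basis b)
    let w : Basis.ofVectorSpaceIndex k W → V := fun i => ((b i : W) : V)
    have hwli : LinearIndependent k w :=
      b.linearIndependent.map' W.subtype (Submodule.ker_subtype W)
    have hwinj : Function.Injective w := hwli.injective
    have hex : ∀ i, ∃ x, f x = w i := fun i => (b i).2
    choose u hu using hex
    have hs : LinearIndepOn k _root_.id (Set.range w) := hwli.linearIndepOn_id
    let B := Module.Basis.extend hs
    let j : Basis.ofVectorSpaceIndex k W → ↥(hs.extend (Set.subset_univ _)) :=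
      fun i => ⟨w i, hs.subset_extend _ ⟨i, rfl⟩⟩
    have hjinj : Function.Injective j := fun a b hab => hwinj (by
      simpa [j] using congrArg Subtype.val hab)
    have hBj : ∀ i, B (j i) = w i := fun i => Module.Basis.extend_apply_self hs (j i)
    let φ : Basis.ofVectorSpaceIndex k W → Module.Dual k V := fun i => B.coord (j i)
    have hφw : ∀ i m, φ i (w m) = if i = m then 1 else 0 := by
      intro i m
      have h1 : φ i (w m) = B.repr (B (j m)) (j i) := by rw [hBj]; rfl
      rw [h1, B.repr_self, Finsupp.single_apply]
      by_cases hm : i = m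
      · simp [hm]
      · rw [if_neg (fun hc => hm (hjinj hc).symm), if_neg hm]
    let ψ : Basis.ofVectorSpaceIndex k W → Module.Dual k V := fun i => f.dualMap (φ i)
    have hψli : LinearIndependent k ψ := by
      let T : Module.Dual k V →ₗ[k] (Basis.ofVectorSpaceIndex k W → k) :=
        LinearMap.pi fun m => LinearMap.applyₗ (u m)
      apply LinearIndependent.of_comp T
      have hTψ : T ∘ ψ = fun i => Pi.single i (1 : k) := by
        funext i
        funext m
        have h1 : (T ∘ ψ) i m = ψ i (u m) := rfl
        have h2 : ψ i (u m) = φ i (w m) := by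
          simp only [ψ, LinearMap.dualMap_apply, hu]
        rw [h1, h2, hφw, Pi.single_apply]
        by_cases hm : i = m
        · simp [hm]
        · rw [if_neg hm, if_neg (fun hc => hm hc.symm)]
      rw [hTψ]
      have hb := (Finsupp.basisSingleOne (R := k) (ι := Basis.ofVectorSpaceIndex k W)).linearIndependent
      have h2 := hb.map' (Finsupp.lcoeFun (α := Basis.ofVectorSpaceIndex k W) (M := k) (R := k))
        (by
          rw [LinearMap.ker_eq_bot]
          intro x y hxy
          exact DFunLike.coe_injective hxy)
      convert h2 using 1
      funext i
      simp only [Finsupp.coe_basisSingleOne, Function.comp, Finsupp.lcoeFun, LinearMap.coe_mk,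
        AddHom.coe_mk]
      funext m
      rw [Pi.single_apply, Finsupp.single_apply]
      by_cases hm : m = i
      · simp [hm]
      · rw [if_neg hm, if_neg (fun hc => hm hc.symm)]
      all_goals rfl
    have ht : LinearIndepOn k _root_.id (Set.range ψ) := hψli.linearIndepOn_id
    let C := Module.Basis.extend ht
    let ξ : Module.Dual k (Module.Dual k V) :=
      C.constr k fun c => if (c : Module.Dual k V) ∈ Set.range ψ then (1 : k) else 0
    have hξψ : ∀ i, ξ (ψ i) = 1 := by
      intro i
      have hmem : ψ i ∈ ht.extend (Set.subset_univ _) := ht.subset_extend _ ⟨i, rfl⟩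
      have heq : ψ i = C ⟨ψ i, hmem⟩ := (Module.Basis.extend_apply_self ht ⟨ψ i, hmem⟩).symm
      rw [heq, Basis.constr_basis]
      exact if_pos ⟨i, rfl⟩
    obtain ⟨v, hv⟩ := h ξ
    have key : (g : V →ₗ[k] V).dualMap.dualMap ξ - ξ = f.dualMap.dualMap ξ := by
      have h3 : f.dualMap.dualMap ξ
          = (g : V →ₗ[k] V).dualMap.dualMap ξ - LinearMap.id.dualMap.dualMap ξ := by
        ext φ'
        simp only [LinearMap.dualMap_apply, LinearMap.sub_apply]
        rw [← map_sub ξ]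
        congr 1
        ext x
        simp [hf]
      rw [h3]
      simp [LinearMap.dualMap_id]
    rw [key] at hv
    have hrepr : ∀ i, B.repr v (j i) = 1 := by
      intro i
      have h1 : Module.Dual.eval k V v (φ i) = φ i v := rfl
      have h2 : f.dualMap.dualMap ξ (φ i) = ξ (ψ i) := rfl
      have h4 := congrArg (fun (t : Module.Dual k (Module.Dual k V)) => t (φ i)) hv
      simp only [h1, h2, hξψ] at h4
      have hcoord : φ i v = B.repr v (j i) := rfl
      rw [← hcoord, h4]
    have hfin : Finite (Basis.ofVectorSpaceIndex k W) := by
      have hjm : ∀ i, j i ∈ (B.repr v).support := fun i =>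
        Finsupp.mem_support_iff.mpr (by rw [hrepr]; exact one_ne_zero)
      let j' : Basis.ofVectorSpaceIndex k W → ((B.repr v).support : Finset _) :=
        fun i => ⟨j i, hjm i⟩
      have hj' : Function.Injective j' := fun a b hab => hjinj (congrArg Subtype.val hab)
      exact Finite.of_injective j' hj'
    exact (not_finite_iff_infinite.mpr hinf) hfin
  · intro h ξ
    set f : V →ₗ[k] V := (g : V →ₗ[k] V) - LinearMap.id with hf
    set W := LinearMap.range f
    have key : (g : V →ₗ[k] V).dualMap.dualMap ξ - ξ = f.dualMap.dualMap ξ := by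
      rw [hf, ddual_sub]
      simp [LinearMap.dualMap_id]
    rw [key]
    have hfac : f = W.subtype ∘ₗ f.rangeRestrict := by
      ext x; rfl
    have : f.dualMap.dualMap ξ = W.subtype.dualMap.dualMap (f.rangeRestrict.dualMap.dualMap ξ) := by
      conv_lhs => rw [hfac]
      rfl
    rw [this]
    obtain ⟨w, hw⟩ := (Module.evalEquiv k W).surjective (f.rangeRestrict.dualMap.dualMap ξ)
    rw [← hw]
    exact ⟨W.subtype w, (eval_nat W.subtype w).symm⟩
end

section
/- Let k be a field, V a k-vector space, and g : V → V a linear endomorphism such that im(g - 1) is finite-dimensional. Then the dual map g* : V* → V* also satisfies that im(g* - 1) is finite-dimensional, with dim im(g* - 1) = dim im(g - 1). -/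
/-- If `g : V → V` is finitary (`im (g-1)` finite-dimensional), then so is its dual map
`g* : V* → V*`, with the same (finite) rank of `g* - 1`. -/
theorem dualMap_finitary (k V : Type*) [Field k] [AddCommGroup V] [Module k V]
    (g : V →ₗ[k] V) (hg : FiniteDimensional k (LinearMap.range (g - LinearMap.id))) :
    FiniteDimensional k (LinearMap.range (g.dualMap - LinearMap.id)) ∧
    Module.finrank k (LinearMap.range (g.dualMap - LinearMap.id)) =
      Module.finrank k (LinearMap.range (g - LinearMap.id)) := by
  set f := g - LinearMap.id with hf
  have key : g.dualMap - LinearMap.id = f.dualMap := by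
    ext φ v
    simp [hf, LinearMap.dualMap_apply, map_sub]
  rw [key]
  have hfac : f = (LinearMap.range f).subtype.comp f.rangeRestrict := rfl
  have hle : LinearMap.range f.dualMap ≤ LinearMap.range f.rangeRestrict.dualMap := by
    conv_lhs => rw [hfac, ← LinearMap.dualMap_comp_dualMap]
    exact LinearMap.range_comp_le_range _ _
  have hfd : FiniteDimensional k (LinearMap.range f.rangeRestrict.dualMap) := by
    infer_instance
  constructor
  · exact Submodule.finiteDimensional_of_le hle
  · exact LinearMap.finrank_range_dualMap_eq_finrank_range f
end

section
/- Let G be a group, k a field, and V a k-linear G-representation such that every g ∈ G acts with im(g - 1) finite-dimensional (V is a finitary module). Then G acts trivially on the quotient V**/V of the double dual by the canonical image of V. -/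
/-- If `V` is a finitary `G`-module (each `g ∈ G` acts with `im (g - 1)` finite-dimensional),
then `G` acts trivially on `V**/V`: for the double-contragredient action on the double dual,
`g·ξ - ξ` lies in the canonical image of `V` for every `ξ ∈ V**` and `g ∈ G`. -/
theorem finitary_acts_trivially_on_bidual_quotient {k G V : Type*} [Field k] [Group G]
    [AddCommGroup V] [Module k V] (ρ : Representation k G V)
    (hfin : ∀ g : G, FiniteDimensional k (LinearMap.range (ρ g - LinearMap.id))) :
    ∀ (g : G) (ξ : Module.Dual k (Module.Dual k V)),
      (ρ g).dualMap.dualMap ξ - ξ ∈ LinearMap.range (Module.Dual.eval k V) := by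
  intro g ξ
  set T : V →ₗ[k] V := ρ g - LinearMap.id with hT
  haveI : FiniteDimensional k (LinearMap.range T) := hfin g
  set W := LinearMap.range T
  set T₀ : V →ₗ[k] W := T.rangeRestrict with hT₀
  set i : W →ₗ[k] V := W.subtype with hi
  set ζ : Module.Dual k (Module.Dual k W) := ξ ∘ₗ T₀.dualMap with hζ
  obtain ⟨w, hw⟩ : ∃ w : W, Module.Dual.eval k W w = ζ :=
    (Module.evalEquiv k W).surjective ζ
  refine ⟨i w, ?_⟩
  ext φ
  have h1 : Module.Dual.eval k V (i w) φ = φ (i w) := rfl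
  have hsub : T.dualMap φ = (ρ g).dualMap φ - φ := by
    ext v; simp [hT, LinearMap.dualMap_apply]
  have h2 : ((ρ g).dualMap.dualMap ξ - ξ) φ = ξ (T.dualMap φ) := by
    simp [hsub, map_sub]
  have h3 : T.dualMap φ = T₀.dualMap (i.dualMap φ) := by
    ext v; rfl
  have h4 : ξ (T₀.dualMap (i.dualMap φ)) = ζ (i.dualMap φ) := rfl
  have h5 : ζ (i.dualMap φ) = φ (i w) := by
    rw [← hw]; rfl
  rw [h1, h2, h3, h4, h5]
end

section
/- Let k be a field, V an infinite-dimensional k-vector space with a nondegenerate alternating bilinear form B, and G the finitary symplectic group (elements g of Sp(V,B) with im(g-1) finite-dimensional). Then the G-fixed points of V* are zero: if λ ∈ V* satisfies λ ∘ g = λ for all g ∈ G, then λ = 0. -/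
/-- Let `V` be infinite-dimensional with a nondegenerate alternating bilinear form `B`, and
let `G` be the finitary symplectic group.  The `G`-fixed points of `V*` are zero: a
functional invariant under every finitary `B`-preserving automorphism vanishes. -/
theorem finitary_symplectic_dual_fixed_points_zero (k V : Type*) [Field k] [AddCommGroup V]
    [Module k V] (hV : ¬ FiniteDimensional k V)
    (B : V →ₗ[k] V →ₗ[k] k) (halt : ∀ v : V, B v v = 0)
    (hnd : ∀ v : V, (∀ w : V, B v w = 0) → v = 0)
    (l : Module.Dual k V)
    (hl : ∀ g : V ≃ₗ[k] V, (∀ x y : V, B (g x) (g y) = B x y) →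
      FiniteDimensional k (LinearMap.range ((g : V →ₗ[k] V) - LinearMap.id)) →
      ∀ v : V, l (g v) = l v) :
    l = 0 := by
  -- skew-symmetry
  have hskew : ∀ x y : V, B x y = - B y x := by
    intro x y
    have h := halt (x + y)
    simp only [map_add, LinearMap.add_apply, halt] at h
    linear_combination h
  -- key: for every u, l u = 0
  have key : ∀ u : V, l u = 0 := by
    intro u
    by_cases hu : u = 0
    · simp [hu]
    -- find v with B u v ≠ 0
    obtain ⟨v, hv⟩ : ∃ v, B u v ≠ 0 := by
      by_contra h
      push_neg at h
      exact hu (hnd u h)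
    -- transvection
    set f : V →ₗ[k] V := LinearMap.id + (LinearMap.toSpanSingleton k V u).comp (B u) with hf
    set f' : V →ₗ[k] V := LinearMap.id - (LinearMap.toSpanSingleton k V u).comp (B u) with hf'
    have hfapp : ∀ x, f x = x + B u x • u := by intro x; simp [hf, LinearMap.toSpanSingleton_apply]
    have hcomp : ∀ x, f (f' x) = x := by
      intro x
      simp [hf, hf', LinearMap.toSpanSingleton_apply, map_sub, map_smul, halt, sub_smul,
        smul_smul]
    have hcomp' : ∀ x, f' (f x) = x := by
      intro x
      simp [hf, hf', LinearMap.toSpanSingleton_apply, map_add, map_smul, halt, add_smul,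
        smul_smul]
    let g : V ≃ₗ[k] V := LinearEquiv.ofLinear f f' (by ext x; simpa using hcomp x)
      (by ext x; simpa using hcomp' x)
    have hgapp : ∀ x, g x = x + B u x • u := hfapp
    have hpres : ∀ x y : V, B (g x) (g y) = B x y := by
      intro x y
      rw [hgapp, hgapp]
      simp only [map_add, map_smul, LinearMap.add_apply, LinearMap.smul_apply, smul_eq_mul,
        halt]
      have := hskew x u
      ring_nf
      rw [hskew x u]
      ring
    have hfin : FiniteDimensional k (LinearMap.range ((g : V →ₗ[k] V) - LinearMap.id)) := by
      have hle : LinearMap.range ((g : V →ₗ[k] V) - LinearMap.id) ≤ Submodule.span k {u} := by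
        rintro _ ⟨x, rfl⟩
        have heq : ((g : V →ₗ[k] V) - LinearMap.id : V →ₗ[k] V) x = B u x • u := by
          simp only [LinearMap.sub_apply, LinearMap.id_apply, LinearEquiv.coe_coe]
          rw [hgapp x]; abel
        rw [heq]
        exact Submodule.smul_mem _ _ (Submodule.mem_span_singleton_self u)
      exact Submodule.finiteDimensional_of_le hle
    have := hl g hpres hfin v
    rw [hgapp v] at this
    simp only [map_add, map_smul, smul_eq_mul, add_eq_left] at this
    have := mul_eq_zero.mp this
    rcases this with h | h
    · exact absurd h hv
    · exact h
  ext x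
  simp [key x]
end

section
/- Let G be a group, k a field, V a k-linear G-representation, and L a local system of subgroups of G. If φ : G → V is a 1-cocycle whose restriction to every L ∈ L is a coboundary (i.e., for each L there exists v_L ∈ V with φ(g) = g·v_L - v_L for all g ∈ L), and V is finite-dimensional over k, then φ is a coboundary on G: there exists v ∈ V with φ(g) = g·v - v for all g ∈ G. -/
/-- Local splitting in degree 1 for finite-dimensional modules: if `φ : G → V` is a
1-cocycle whose restriction to every member of a local system `𝓛` is a coboundary, and
`V` is finite-dimensional, then `φ` is a coboundary on `G`. -/
theorem locally_coboundary_is_coboundary {k G V : Type*} [Field k] [Group G] [AddCommGroup V]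
    [Module k V] [FiniteDimensional k V] (ρ : Representation k G V) (𝓛 : Set (Subgroup G))
    (hdir : ∀ L₁ ∈ 𝓛, ∀ L₂ ∈ 𝓛, ∃ L₃ ∈ 𝓛, L₁ ≤ L₃ ∧ L₂ ≤ L₃)
    (hunion : ∀ g : G, ∃ L ∈ 𝓛, g ∈ L) (φ : G → V)
    (hcocycle : ∀ g h : G, φ (g * h) = φ g + ρ g (φ h))
    (hlocal : ∀ L ∈ 𝓛, ∃ v : V, ∀ g ∈ L, φ g = ρ g v - v) :
    ∃ v : V, ∀ g : G, φ g = ρ g v - v := by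
  classical
  -- fixed-point submodule of L
  set W : Subgroup G → Submodule k V :=
    fun L => ⨅ g ∈ (L : Set G), LinearMap.ker ((ρ g : V →ₗ[k] V) - LinearMap.id) with hW
  have memW : ∀ (L : Subgroup G) (x : V), x ∈ W L ↔ ∀ g ∈ L, ρ g x = x := by
    intro L x
    simp [hW, Submodule.mem_iInf, LinearMap.mem_ker, sub_eq_zero]
  obtain ⟨L₁, hL₁, -⟩ := hunion 1
  have hex : ∃ n, ∃ L ∈ 𝓛, Module.finrank k (W L) = n := ⟨_, L₁, hL₁, rfl⟩
  obtain ⟨L₀, hL₀, hL₀rank⟩ := Nat.find_spec hex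
  have hmin : ∀ L ∈ 𝓛, Nat.find hex ≤ Module.finrank k (W L) := by
    intro L hL
    by_contra hlt
    exact Nat.find_min hex (lt_of_not_ge hlt) ⟨L, hL, rfl⟩
  obtain ⟨v, hv⟩ := hlocal L₀ hL₀
  refine ⟨v, fun g => ?_⟩
  obtain ⟨L, hL, hgL⟩ := hunion g
  obtain ⟨L₃, hL₃, hle₀, hle⟩ := hdir L₀ hL₀ L hL
  obtain ⟨w, hw⟩ := hlocal L₃ hL₃
  have hWle : W L₃ ≤ W L₀ := fun x hx =>
    (memW L₀ x).2 fun g hg => (memW L₃ x).1 hx g (hle₀ hg)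
  have hWeq : W L₃ = W L₀ := by
    apply Submodule.eq_of_le_of_finrank_le hWle
    calc Module.finrank k (W L₀) = Nat.find hex := hL₀rank
      _ ≤ Module.finrank k (W L₃) := hmin L₃ hL₃
  have hvw : v - w ∈ W L₃ := by
    rw [hWeq, memW]
    intro g' hg'
    have h1 := hv g' hg'
    have h2 := hw g' (hle₀ hg')
    have := h1.symm.trans h2
    rw [map_sub, sub_eq_sub_iff_sub_eq_sub]
    exact this
  have hfix : ρ g (v - w) = v - w := (memW L₃ (v - w)).1 hvw g (hle hgL)
  have hgw := hw g (hle hgL)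
  rw [hgw]
  rw [map_sub] at hfix
  rw [sub_eq_sub_iff_sub_eq_sub, ← neg_sub (ρ g v), ← neg_sub v w, hfix]
end
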